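/- arXiv:1512.09321 — 2 statements merged into one kernel-verified Lean document; each statement's English description precedes it below -/
import Mathlib

section
/- Let S be a nonempty set of arcs, i.e. pairs (t,u) of integers with u < t, such that every arc of S has an overarc in S. Then every integer p has an overarc in S, i.e. there exists an arc (v,x) ∈ S with x < p < v. -/
open Set

/-- An arc of the `∞`-gon: a pair of integers `(t, u)`, source `t`, target `u`. -/
abbrev Arc := ℤ × ℤ

/-- `(t,u)` is `d`-admissible for `d = w - 1`: `u - t ≤ w` and `u - t ≡ 1 (mod d)`. -/
def IsAdmissible (w : ℤ) (a : Arc) : Prop :=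
  a.2 - a.1 ≤ w ∧ (w - 1) ∣ (a.2 - a.1 - 1)

/-- `p` is an endpoint of the arc `a`. -/
def IsEndpoint (p : ℤ) (a : Arc) : Prop := p = a.1 ∨ p = a.2

/-- `b = (v,x)` is an overarc of `a = (t,u)` if `x < u < t < v`. -/
def OverarcOf (b a : Arc) : Prop := b.2 < a.2 ∧ a.2 < a.1 ∧ a.1 < b.1

/-- `b = (v,x)` is an overarc of the integer `p` if `x < p < v`. -/
def OverarcOfVertex (b : Arc) (p : ℤ) : Prop := b.2 < p ∧ p < b.1

/-- Arcs `a` and `b` share an endpoint. -/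
def SharesEndpoint (a b : Arc) : Prop :=
  a.1 = b.1 ∨ a.1 = b.2 ∨ a.2 = b.1 ∨ a.2 = b.2

/-- Arcs `a = (t,u)` and `b = (v,x)` strictly cross: `u < x < t < v` or `x < u < v < t`. -/
def StrictCross (a b : Arc) : Prop :=
  (a.2 < b.2 ∧ b.2 < a.1 ∧ a.1 < b.1) ∨ (b.2 < a.2 ∧ a.2 < b.1 ∧ b.1 < a.1)

/-- Two arcs cross if they share an endpoint or strictly cross. -/
def Cross (a b : Arc) : Prop := SharesEndpoint a b ∨ StrictCross a b

/-- `p` is isolated with respect to `X` if it is an endpoint of no arc of `X`. -/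
def Isolated (X : Set Arc) (p : ℤ) : Prop := ∀ a ∈ X, ¬ IsEndpoint p a

/-- `p` is an inner-isolated vertex of the arc `b` with respect to `X`: `p` is isolated,
`b` is an overarc of `p`, and no arc of `X` of which `b` is an overarc is an overarc of `p`. -/
def InnerIsolatedOf (X : Set Arc) (b : Arc) (p : ℤ) : Prop :=
  Isolated X p ∧ OverarcOfVertex b p ∧ ∀ c ∈ X, OverarcOf b c → ¬ OverarcOfVertex c p

/-- `p` is an outer-isolated vertex of `X`: isolated with no overarc in `X`. -/
def OuterIsolated (X : Set Arc) (p : ℤ) : Prop :=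
  Isolated X p ∧ ∀ b ∈ X, ¬ OverarcOfVertex b p

/-- A combinatorial `w`-Hom configuration: a set of `d`-admissible arcs (`d = w - 1`),
pairwise noncrossing, such that every arc has exactly `|w| - 1` inner-isolated vertices
and there are at most `|w|` outer-isolated vertices. -/
def IsHomConfig (w : ℤ) (S : Set Arc) : Prop :=
  (∀ a ∈ S, IsAdmissible w a) ∧
  (∀ a ∈ S, ∀ b ∈ S, a ≠ b → ¬ Cross a b) ∧
  (∀ a ∈ S, {p : ℤ | InnerIsolatedOf S a p}.encard = ((-w - 1).toNat : ℕ∞)) ∧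
  {p : ℤ | OuterIsolated S p}.encard ≤ ((-w).toNat : ℕ∞)

/-- A combinatorial `w`-Riedtmann configuration: a `w`-Hom configuration with at most
`|w| - 1` outer-isolated vertices. -/
def IsRiedtmann (w : ℤ) (S : Set Arc) : Prop :=
  IsHomConfig w S ∧ {p : ℤ | OuterIsolated S p}.encard ≤ ((-w - 1).toNat : ℕ∞)

/-- A combinatorial `w`-simple-minded system: a `w`-Riedtmann configuration in which
every arc has an overarc. -/
def IsSMS (w : ℤ) (S : Set Arc) : Prop :=
  IsRiedtmann w S ∧ ∀ a ∈ S, ∃ b ∈ S, OverarcOf b a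

/-- `t` is a replacement of `s` in the `w`-Hom configuration `S`. -/
def IsReplacement (w : ℤ) (S : Set Arc) (s t : Arc) : Prop :=
  t ≠ s ∧ IsHomConfig w ((S \ {s}) ∪ {t})

/-- `c` is a Ptolemy arc of class I associated to the strictly crossing arcs `a` and `b`:
one of the four arcs joining an endpoint of `a` to an endpoint of `b`. -/
def IsPtolemyI (a b c : Arc) : Prop :=
  StrictCross a b ∧ c.2 < c.1 ∧
    ((IsEndpoint c.1 a ∧ IsEndpoint c.2 b) ∨ (IsEndpoint c.1 b ∧ IsEndpoint c.2 a))

/-- `c` is a Ptolemy arc of class II associated to the neighbouring arcs `a` and `b`: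
the distance `1` is realised by endpoints `p` and `p - 1`, and `c` joins the endpoint of
`a` other than `p, p-1` to the endpoint of `b` other than `p, p-1`. -/
def IsPtolemyII (a b c : Arc) : Prop :=
  ¬ Cross a b ∧
  ∃ p e f : ℤ,
    (((IsEndpoint p a ∧ IsEndpoint (p - 1) b) ∧ (IsEndpoint e a ∧ e ≠ p) ∧
        (IsEndpoint f b ∧ f ≠ p - 1)) ∨
     ((IsEndpoint p b ∧ IsEndpoint (p - 1) a) ∧ (IsEndpoint e b ∧ e ≠ p) ∧
        (IsEndpoint f a ∧ f ≠ p - 1))) ∧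
    c = (max e f, min e f)

/-- `Y` is a set of `d`-admissible arcs closed under adjoining `d`-admissible Ptolemy arcs
of classes I and II. -/
def PtolemyClosed (w : ℤ) (Y : Set Arc) : Prop :=
  (∀ a ∈ Y, IsAdmissible w a) ∧
  ∀ a ∈ Y, ∀ b ∈ Y, ∀ c : Arc,
    (IsPtolemyI a b c ∨ IsPtolemyII a b c) → IsAdmissible w c → c ∈ Y

/-- The Ptolemy closure of `X`: the smallest set of `d`-admissible arcs containing `X`
and closed under adjoining `d`-admissible Ptolemy arcs of classes I and II. -/
def PtolemyClosure (w : ℤ) (X : Set Arc) : Set Arc :=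
  ⋂₀ {Y : Set Arc | X ⊆ Y ∧ PtolemyClosed w Y}

/-- `p` is a left fountain of `A`: infinitely many arcs of `A` have source `p`. -/
def LeftFountain (A : Set Arc) (p : ℤ) : Prop := {a ∈ A | a.1 = p}.Infinite

/-- `p` is a right fountain of `A`: infinitely many arcs of `A` have target `p`. -/
def RightFountain (A : Set Arc) (p : ℤ) : Prop := {a ∈ A | a.2 = p}.Infinite

/-- The set `X_S = { (t + j, u + j) : (t,u) ∈ S, 0 ≤ j ≤ |w| - 1 }`, corresponding to the
union of the shifted copies `Σ^i S` for `w + 1 ≤ i ≤ 0`. -/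
def ShiftFamily (w : ℤ) (S : Set Arc) : Set Arc :=
  {c : Arc | ∃ a ∈ S, ∃ j : ℤ, 0 ≤ j ∧ j ≤ -w - 1 ∧ c = (a.1 + j, a.2 + j)}

/-- if `S` is a nonempty set of arcs in which every arc has an overarc in
`S`, then every integer has an overarc in `S`. -/
theorem stmt_17 (S : Set Arc) (hne : S.Nonempty)
    (harc : ∀ a ∈ S, a.2 < a.1)
    (hover : ∀ a ∈ S, ∃ b ∈ S, OverarcOf b a) :
    ∀ p : ℤ, ∃ b ∈ S, OverarcOfVertex b p := by
  intro p
  obtain ⟨a, ha⟩ := hne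
  have key : ∀ n : ℕ, ∃ b ∈ S, b.2 ≤ a.2 - n ∧ a.1 + n ≤ b.1 := by
    intro n
    induction n with
    | zero => exact ⟨a, ha, by simp, by simp⟩
    | succ k ih =>
      obtain ⟨b, hb, h1, h2⟩ := ih
      obtain ⟨c, hc, hc1, _, hc3⟩ := hover b hb
      exact ⟨c, hc, by push_cast; omega, by push_cast; omega⟩
  obtain ⟨b, hb, h1, h2⟩ := key ((a.2 - p).toNat + (p - a.1).toNat + 1)
  refine ⟨b, hb, ?_, ?_⟩ <;> [skip; skip] <;>
    · have := Int.self_le_toNat (a.2 - p)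
      have := Int.self_le_toNat (p - a.1)
      push_cast at h1 h2
      omega
end

section
/- Let w ≤ -1 be an integer and d := w - 1. Then the Ptolemy closure of the set { (x, x + w) : x ∈ ℤ } of all d-admissible arcs of minimal length |w| equals the set of all d-admissible arcs. -/
open Set

lemma stmt18_key (w : ℤ) (hw : w ≤ -1) (Y : Set Arc)
    (hX : {a : Arc | ∃ x : ℤ, a = (x, x + w)} ⊆ Y) (hY : PtolemyClosed w Y) :
    ∀ n : ℕ, ∀ t : ℤ, ((t, t + w + n * (w - 1)) : Arc) ∈ Y := by
  intro n
  induction n with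
  | zero => intro t; simpa using hX ⟨t, by simp⟩
  | succ n ih =>
    intro t
    have ha : ((t, t + w) : Arc) ∈ Y := hX ⟨t, rfl⟩
    have hb : ((t + w - 1, (t + w - 1) + w + n * (w - 1)) : Arc) ∈ Y := ih (t + w - 1)
    have hn : (0:ℤ) ≤ n := Int.ofNat_nonneg n
    have hnw : (n:ℤ) * (w - 1) ≤ 0 := mul_nonpos_of_nonneg_of_nonpos hn (by linarith)
    have hc : IsAdmissible w ((t, t + w + (n+1 : ℕ) * (w - 1)) : Arc) := by
      constructor
      · push_cast; nlinarith
      · push_cast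
        refine ⟨(n : ℤ) + 2, by ring⟩
    refine hY.2 _ ha _ hb _ (Or.inr ?_) hc
    constructor
    · -- ¬ Cross
      rintro (h | h)
      · rcases h with h | h | h | h <;> simp only [] at h <;> nlinarith
      · rcases h with ⟨h1, h2, h3⟩ | ⟨h1, h2, h3⟩ <;> simp only [] at * <;> nlinarith
    · refine ⟨t + w, t, (t + w - 1) + w + n * (w - 1), Or.inl ⟨⟨Or.inr rfl, Or.inl (by ring)⟩,
        ⟨Or.inl rfl, by intro h; omega⟩, ⟨Or.inr rfl, by intro h; nlinarith⟩⟩, ?_⟩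
      have hlt : (t + w - 1) + w + n * (w - 1) < t := by nlinarith
      have hmax : max t ((t + w - 1) + w + n * (w - 1)) = t := max_eq_left hlt.le
      have hmin : min t ((t + w - 1) + w + n * (w - 1)) = (t + w - 1) + w + n * (w - 1) :=
        min_eq_right hlt.le
      rw [hmax, hmin]
      push_cast
      refine Prod.ext rfl ?_
      show t + w + ((n:ℤ)+1) * (w-1) = (t + w - 1) + w + n * (w - 1)
      ring

/-- the Ptolemy closure of the set of all minimal-length `d`-admissible arcs
`(x, x + w)` is the set of all `d`-admissible arcs. -/
theorem stmt_18 (w : ℤ) (hw : w ≤ -1) :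
    PtolemyClosure w {a : Arc | ∃ x : ℤ, a = (x, x + w)} = {a : Arc | IsAdmissible w a} := by
  apply le_antisymm
  · intro a ha
    exact ha {b | IsAdmissible w b}
      ⟨by rintro b ⟨x, rfl⟩; exact ⟨by simp, ⟨1, by ring⟩⟩,
       fun b hb => hb, fun a _ b _ c _ hc => hc⟩
  · rintro a ⟨h1, m, hm⟩
    intro Y hY
    obtain ⟨hXY, hclY⟩ := hY
    have hw1 : w - 1 < 0 := by linarith
    have hm1 : 1 ≤ m := by nlinarith [hm]
    have hrep : a = ((a.1, a.1 + w + ((m - 1).toNat : ℤ) * (w - 1)) : Arc) := by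
      refine Prod.ext rfl ?_
      have : ((m - 1).toNat : ℤ) = m - 1 := Int.toNat_of_nonneg (by linarith)
      rw [this]
      show a.2 = a.1 + w + (m - 1) * (w - 1)
      linarith [hm, (by ring : (w - 1) * m = (m - 1) * (w - 1) + (w - 1))]
    rw [hrep]
    exact stmt18_key w hw Y hXY hclY (m - 1).toNat a.1
end
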